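/- arXiv:2110.10885 — 2 statements merged into one kernel-verified Lean document; each statement's English description precedes it below -/
import Mathlib

section
/- With notation as above, the quotient H_k / Q_k is isomorphic to (Z^k + Z_k)/(Z^k + B_k), where Q_k is the subspace of homology classes with a harmonic representative. In particular the codimension of Q_k in H_k equals dim(Z^k + Z_k) − dim(Z^k + B_k). -/
open Matrix

/-!
`B_k ≤ Z_k` because `∂_k ∂_{k+1} = 0`. The third isomorphism theorem identifies `H_k / Q_k` with
`Z_k / (Z_k ∩ (Z^k + B_k))`, and the second isomorphism theorem identifies this with
`(Z_k + (Z^k + B_k)) / (Z^k + B_k)`, where `Z_k + Z^k + B_k = Z^k + Z_k` since `B_k ≤ Z_k`.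
-/

theorem Matrix.range_mulVecLin_le_ker_mulVecLin {R : Type*} [CommSemiring R] {l m n : Type*}
    [Fintype m] [Fintype n] {A : Matrix l m R} {B : Matrix m n R} (h : A * B = 0) :
    LinearMap.range B.mulVecLin ≤ LinearMap.ker A.mulVecLin :=
  LinearMap.range_le_ker_iff.mpr (by rw [← Matrix.mulVecLin_mul, h, Matrix.mulVecLin_zero])

namespace Submodule

variable {R M : Type*} [Ring R] [AddCommGroup M] [Module R M]

theorem nonempty_quotient_map_mkQ_equiv_sup_quotient {Z B : Submodule R M} (hBZ : B ≤ Z)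
    (C : Submodule R M) :
    Nonempty (((Z ⧸ B.comap Z.subtype) ⧸
        ((Z ⊓ (C ⊔ B)).comap Z.subtype).map (B.comap Z.subtype).mkQ) ≃ₗ[R]
      ((C ⊔ Z : Submodule R M) ⧸ (C ⊔ B).comap (C ⊔ Z).subtype)) := by
  have hsup : Z ⊔ (C ⊔ B) = C ⊔ Z := by
    rw [sup_comm C B, ← sup_assoc, sup_eq_left.2 hBZ, sup_comm]
  rw [← hsup]
  exact ⟨(quotientQuotientEquivQuotient _ _
    (comap_mono (le_inf hBZ le_sup_right))).trans (LinearMap.quotientInfEquivSupQuotient Z (C ⊔ B))⟩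

theorem finrank_quotient_comap_subtype {K V : Type*} [DivisionRing K] [AddCommGroup V]
    [Module K V] [FiniteDimensional K V] {S T : Submodule K V} (hTS : T ≤ S) :
    Module.finrank K (S ⧸ T.comap S.subtype) = Module.finrank K S - Module.finrank K T := by
  rw [finrank_quotient, (comapSubtypeEquivOfLe hTS).finrank_eq]

end Submodule

theorem stmt_8_general {F : Type*} [Field F] {nkm1 nk nk1 : ℕ}
    (Dk : Matrix (Fin nkm1) (Fin nk) F) (Dk1 : Matrix (Fin nk) (Fin nk1) F)
    (hchain : Dk * Dk1 = 0)
    (Z : Submodule F (Fin nk → F)) (hZ : Z = LinearMap.ker Dk.mulVecLin)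
    (B : Submodule F (Fin nk → F)) (hB : B = LinearMap.range Dk1.mulVecLin)
    (Zco : Submodule F (Fin nk → F))
    (Q : Submodule F (↥Z ⧸ B.comap Z.subtype))
    (hQ : Q = Submodule.map (B.comap Z.subtype).mkQ
        ((Z ⊓ (Zco ⊔ B)).comap Z.subtype)) :
    Nonempty (((↥Z ⧸ B.comap Z.subtype) ⧸ Q) ≃ₗ[F]
        (↥(Zco ⊔ Z) ⧸ ((Zco ⊔ B).comap (Zco ⊔ Z).subtype))) ∧
      Module.finrank F ((↥Z ⧸ B.comap Z.subtype) ⧸ Q) =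
        Module.finrank F ↥(Zco ⊔ Z) - Module.finrank F ↥(Zco ⊔ B) := by
  have hBZ : B ≤ Z := hB ▸ hZ ▸ Matrix.range_mulVecLin_le_ker_mulVecLin hchain
  subst hQ
  obtain ⟨e⟩ := Submodule.nonempty_quotient_map_mkQ_equiv_sup_quotient hBZ Zco
  refine ⟨⟨e⟩, ?_⟩
  rw [e.finrank_eq, Submodule.finrank_quotient_comap_subtype
    (sup_le_sup_left hBZ Zco)]

/-- `H_k/Q_k ≅ (Z^k + Z_k)/(Z^k + B_k)`, and the codimension of `Q_k`
in `H_k` is `dim(Z^k + Z_k) − dim(Z^k + B_k)`. -/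
theorem stmt_8 {F : Type*} [Field F] {nkm1 nk nk1 : ℕ}
    (Dk : Matrix (Fin nkm1) (Fin nk) F) (Dk1 : Matrix (Fin nk) (Fin nk1) F)
    (hchain : Dk * Dk1 = 0)
    (Z : Submodule F (Fin nk → F)) (hZ : Z = LinearMap.ker Dk.mulVecLin)
    (B : Submodule F (Fin nk → F)) (hB : B = LinearMap.range Dk1.mulVecLin)
    (Zco : Submodule F (Fin nk → F)) (hZco : Zco = LinearMap.ker Dk1ᵀ.mulVecLin)
    (Q : Submodule F (↥Z ⧸ B.comap Z.subtype))
    (hQ : Q = Submodule.map (B.comap Z.subtype).mkQ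
        ((Z ⊓ (Zco ⊔ B)).comap Z.subtype)) :
    Nonempty (((↥Z ⧸ B.comap Z.subtype) ⧸ Q) ≃ₗ[F]
        (↥(Zco ⊔ Z) ⧸ ((Zco ⊔ B).comap (Zco ⊔ Z).subtype))) ∧
      Module.finrank F ((↥Z ⧸ B.comap Z.subtype) ⧸ Q) =
        Module.finrank F ↥(Zco ⊔ Z) - Module.finrank F ↥(Zco ⊔ B) :=
  stmt_8_general Dk Dk1 hchain Z hZ B hB Zco Q hQ
end

section
/- Let C_• be a chain complex of finite-dimensional F-vector spaces with adjoint differentials satisfying ker(∂_k*∂_k) = ker(∂_k) and ker(∂_{k+1}∂_{k+1}*) = ker(∂_{k+1}*), and suppose B_k ∩ B^k = 0. Then ker(L_k) = Z_k ∩ Z^k, where L_k = ∂_{k+1}∂_{k+1}* + ∂_k*∂_k. -/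
/-! If `L x = 0`, then `∂_k*∂_k x = -∂_{k+1}∂_{k+1}* x` lies in `B_k ∩ B^k = 0`, so both terms of the
Laplacian vanish on `x`, and the two kernel hypotheses turn this into `∂_k x = 0` and `∂_{k+1}* x = 0`. -/

open Matrix

namespace LinearMap

variable {R M N : Type*} [Ring R] [AddCommGroup M] [AddCommGroup N] [Module R M] [Module R N]

theorem ker_add_eq_inf_of_disjoint_range {f g : M →ₗ[R] N}
    (hfg : Disjoint (range f) (range g)) : ker (f + g) = ker f ⊓ ker g := by
  refine le_antisymm (fun x hx ↦ ?_) (fun x ⟨hf, hg⟩ ↦ by simp_all)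
  have hfx : f x = g (-x) := by
    rw [map_neg, eq_neg_iff_add_eq_zero]
    exact hx
  have hf0 : f x = 0 := Submodule.disjoint_def.mp hfg _ ⟨x, rfl⟩ (hfx ▸ ⟨-x, rfl⟩)
  have hg0 : g x = 0 := by rwa [mem_ker, add_apply, hf0, zero_add] at hx
  exact ⟨hf0, hg0⟩

end LinearMap

theorem Matrix.range_mulVecLin_mul_le {R : Type*} [CommSemiring R] {l m n : Type*} [Fintype m]
    [Fintype n] (A : Matrix l m R) (B : Matrix m n R) :
    LinearMap.range (A * B).mulVecLin ≤ LinearMap.range A.mulVecLin := by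
  rw [mulVecLin_mul]
  exact LinearMap.range_comp_le_range _ _

theorem stmt_16_general {F : Type*} [Field F] {nkm1 nk nk1 : ℕ}
    (Dk : Matrix (Fin nkm1) (Fin nk) F) (Dk1 : Matrix (Fin nk) (Fin nk1) F)
    (h1 : LinearMap.ker (Dkᵀ * Dk).mulVecLin = LinearMap.ker Dk.mulVecLin)
    (h2 : LinearMap.ker (Dk1 * Dk1ᵀ).mulVecLin = LinearMap.ker Dk1ᵀ.mulVecLin)
    (h3 : LinearMap.range Dk1.mulVecLin ⊓ LinearMap.range Dkᵀ.mulVecLin = ⊥) :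
    LinearMap.ker (Dk1 * Dk1ᵀ + Dkᵀ * Dk).mulVecLin =
      LinearMap.ker Dk.mulVecLin ⊓ LinearMap.ker Dk1ᵀ.mulVecLin := by
  have hdisj : Disjoint (LinearMap.range (Dk1 * Dk1ᵀ).mulVecLin)
      (LinearMap.range (Dkᵀ * Dk).mulVecLin) :=
    (disjoint_iff.mpr h3).mono (range_mulVecLin_mul_le _ _) (range_mulVecLin_mul_le _ _)
  rw [mulVecLin_add, LinearMap.ker_add_eq_inf_of_disjoint_range hdisj, h1, h2, inf_comm]

/-- if `ker(∂_k*∂_k) = ker(∂_k)`, `ker(∂_{k+1}∂_{k+1}*) = ker(∂_{k+1}*)`,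
and `B_k ∩ B^k = 0`, then `ker(L_k) = Z_k ∩ Z^k`. -/
theorem stmt_16 {F : Type*} [Field F] {nkm1 nk nk1 : ℕ}
    (Dk : Matrix (Fin nkm1) (Fin nk) F) (Dk1 : Matrix (Fin nk) (Fin nk1) F)
    (hchain : Dk * Dk1 = 0)
    (h1 : LinearMap.ker (Dkᵀ * Dk).mulVecLin = LinearMap.ker Dk.mulVecLin)
    (h2 : LinearMap.ker (Dk1 * Dk1ᵀ).mulVecLin = LinearMap.ker Dk1ᵀ.mulVecLin)
    (h3 : LinearMap.range Dk1.mulVecLin ⊓ LinearMap.range Dkᵀ.mulVecLin = ⊥) :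
    LinearMap.ker (Dk1 * Dk1ᵀ + Dkᵀ * Dk).mulVecLin =
      LinearMap.ker Dk.mulVecLin ⊓ LinearMap.ker Dk1ᵀ.mulVecLin :=
  stmt_16_general Dk Dk1 h1 h2 h3
end
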